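/- Let S be a connected closed surface with a Riemannian metric such that area(S) ≤ 2π(2g-2) and such that any two points at distance ≥ 2ρ contribute disjoint embedded disks of area ≥ πρ². Then the diameter of S satisfies diam(S) ≤ 8(g-1)/ρ. -/
import Mathlib


/-- Bounded Diameter Lemma: a connected closed surface of genus `g` with
`area(S) ≤ 2π(2g-2)`, in which any pairwise `2ρ`-separated finite set of points carries
pairwise disjoint embedded disks of area `≥ πρ²`, and which is a geodesic space,
has diameter at most `8(g-1)/ρ`. -/
theorem stmt3 {S : Type*} [MetricSpace S] [MeasurableSpace S] (μ : MeasureTheory.Measure S)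
    [Nonempty S]
    (hconn : IsConnected (Set.univ : Set S)) (hcpt : IsCompact (Set.univ : Set S))
    (ρ : ℝ) (hρ : 0 < ρ) (g : ℕ)
    (harea : μ Set.univ ≤ ENNReal.ofReal (2 * Real.pi * (2 * (g : ℝ) - 2)))
    (hdisks : ∀ P : Finset S, (∀ p ∈ P, ∀ q ∈ P, p ≠ q → 2 * ρ ≤ dist p q) →
      ∃ D : S → Set S,
        (∀ p ∈ P, MeasurableSet (D p) ∧ ENNReal.ofReal (Real.pi * ρ ^ 2) ≤ μ (D p)) ∧
        (P : Set S).PairwiseDisjoint D)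
    (hgeo : ∀ x y : S, ∀ t : ℝ, 0 ≤ t → t ≤ dist x y →
      ∃ z : S, dist x z = t ∧ dist z y = dist x y - t) :
    Metric.diam (Set.univ : Set S) ≤ 8 * ((g : ℝ) - 1) / ρ := by
  classical
  have hπ : (0:ℝ) < Real.pi := Real.pi_pos
  -- counting lemma
  have key : ∀ P : Finset S, (∀ p ∈ P, ∀ q ∈ P, p ≠ q → 2 * ρ ≤ dist p q) →
      P.Nonempty → (P.card : ℝ) * (Real.pi * ρ ^ 2) ≤ 2 * Real.pi * (2 * (g : ℝ) - 2) := by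
    intro P hP hne
    obtain ⟨D, hD1, hD2⟩ := hdisks P hP
    have hsum : ENNReal.ofReal ((P.card : ℝ) * (Real.pi * ρ ^ 2)) ≤ μ Set.univ := by
      calc ENNReal.ofReal ((P.card : ℝ) * (Real.pi * ρ ^ 2))
          = (P.card : ENNReal) * ENNReal.ofReal (Real.pi * ρ ^ 2) := by
            rw [ENNReal.ofReal_mul (by positivity), ENNReal.ofReal_natCast]
        _ = ∑ _p ∈ P, ENNReal.ofReal (Real.pi * ρ ^ 2) := by
            rw [Finset.sum_const, nsmul_eq_mul]
        _ ≤ ∑ p ∈ P, μ (D p) := Finset.sum_le_sum (fun p hp => (hD1 p hp).2)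
        _ = μ (⋃ p ∈ P, D p) :=
            (MeasureTheory.measure_biUnion_finset hD2 (fun p hp => (hD1 p hp).1)).symm
        _ ≤ μ Set.univ := MeasureTheory.measure_mono (Set.subset_univ _)
    have h := hsum.trans harea
    rcases ENNReal.ofReal_le_ofReal_iff'.mp h with h' | h'
    · exact h'
    · exfalso
      have hc : (0:ℝ) < (P.card : ℝ) := by
        exact_mod_cast Nat.pos_of_ne_zero (Finset.card_ne_zero_of_mem hne.choose_spec)
      nlinarith [mul_pos hc (mul_pos hπ (pow_pos hρ 2))]
  -- from singleton: π ρ² ≤ RHS, hence g ≥ 2 morally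
  have hsingle : Real.pi * ρ ^ 2 ≤ 2 * Real.pi * (2 * (g : ℝ) - 2) := by
    obtain ⟨x⟩ := ‹Nonempty S›
    have := key {x} (by simp) ⟨x, by simp⟩
    simpa using this
  have hC : 0 ≤ 8 * ((g : ℝ) - 1) / ρ := by
    have : 0 ≤ (g:ℝ) - 1 := by nlinarith
    positivity
  apply Metric.diam_le_of_forall_dist_le hC
  intro x _ y _
  set d := dist x y with hdxy
  have hd0 : 0 ≤ d := dist_nonneg
  set n := ⌊d / (2 * ρ)⌋₊ with hn
  have h2ρ : (0:ℝ) < 2 * ρ := by linarith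
  have hle : ∀ k : ℕ, k ≤ n → 2 * ρ * k ≤ d := by
    intro k hk
    have h1 : (k : ℝ) ≤ d / (2 * ρ) :=
      le_trans (by exact_mod_cast hk) (Nat.floor_le (by positivity))
    calc 2 * ρ * k ≤ 2 * ρ * (d / (2 * ρ)) := by
          apply mul_le_mul_of_nonneg_left h1 (le_of_lt h2ρ)
      _ = d := by field_simp
  have hex : ∀ k : ℕ, k ≤ n → ∃ z : S, dist x z = 2 * ρ * k ∧ dist z y = d - 2 * ρ * k :=
    fun k hk => hgeo x y _ (by positivity) (hle k hk)
  let f : ℕ → S := fun k => if h : k ≤ n then (hex k h).choose else x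
  have hf : ∀ k, k ≤ n → dist x (f k) = 2 * ρ * k := by
    intro k hk
    simp only [f, dif_pos hk]
    exact (hex k hk).choose_spec.1
  -- separation
  have hsep : ∀ i j : ℕ, i ≤ n → j ≤ n → i < j → 2 * ρ ≤ dist (f i) (f j) := by
    intro i j hi hj hij
    have h1 : dist x (f j) ≤ dist x (f i) + dist (f i) (f j) := dist_triangle _ _ _
    have h2 : dist x (f i) = 2 * ρ * i := hf i hi
    have h3 : dist x (f j) = 2 * ρ * j := hf j hj
    have h4 : (i : ℝ) + 1 ≤ (j : ℝ) := by exact_mod_cast hij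
    nlinarith
  have hsep' : ∀ i j : ℕ, i ≤ n → j ≤ n → i ≠ j → 2 * ρ ≤ dist (f i) (f j) := by
    intro i j hi hj hij
    rcases lt_or_gt_of_ne hij with h | h
    · exact hsep i j hi hj h
    · rw [dist_comm]; exact hsep j i hj hi h
  have hinj : Set.InjOn f (Finset.range (n + 1) : Set ℕ) := by
    intro i hi j hj hij
    simp only [Finset.coe_range, Set.mem_Iio] at hi hj
    by_contra hne
    have := hsep' i j (Nat.lt_succ_iff.mp hi) (Nat.lt_succ_iff.mp hj) hne
    rw [hij, dist_self] at this
    linarith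
  set P : Finset S := (Finset.range (n + 1)).image f with hP
  have hcard : P.card = n + 1 := by
    rw [hP, Finset.card_image_of_injOn hinj, Finset.card_range]
  have hPsep : ∀ p ∈ P, ∀ q ∈ P, p ≠ q → 2 * ρ ≤ dist p q := by
    intro p hp q hq hpq
    simp only [hP, Finset.mem_image, Finset.mem_range] at hp hq
    obtain ⟨i, hi, rfl⟩ := hp
    obtain ⟨j, hj, rfl⟩ := hq
    exact hsep' i j (Nat.lt_succ_iff.mp hi) (Nat.lt_succ_iff.mp hj)
      (fun h => hpq (by rw [h]))
  have hkey := key P hPsep ⟨f 0, by simp only [hP, Finset.mem_image, Finset.mem_range]; exact ⟨0, Nat.succ_pos n, rfl⟩⟩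
  rw [hcard] at hkey
  -- d < 2ρ(n+1)
  have hdlt : d < 2 * ρ * (n + 1) := by
    have := Nat.lt_floor_add_one (d / (2 * ρ))
    calc d = 2 * ρ * (d / (2 * ρ)) := by field_simp
      _ < 2 * ρ * (n + 1) := by
          apply mul_lt_mul_of_pos_left _ h2ρ
          exact_mod_cast this
  -- conclude
  have hnr : ((n : ℝ) + 1) * ρ ^ 2 ≤ 2 * (2 * (g : ℝ) - 2) := by
    have : ((n:ℝ) + 1) * (Real.pi * ρ ^ 2) ≤ 2 * Real.pi * (2 * (g : ℝ) - 2) := by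
      exact_mod_cast hkey
    nlinarith
  rw [hdxy] at hdlt ⊢
  rw [div_eq_mul_inv]
  have hρinv : 0 < ρ⁻¹ := inv_pos.mpr hρ
  have h8 : 2 * ρ * ((n:ℝ) + 1) ≤ 8 * ((g:ℝ) - 1) * ρ⁻¹ := by
    have hr2 : ρ ^ 2 = ρ * ρ := sq ρ
    rw [sq] at hnr
    have := mul_le_mul_of_nonneg_left hnr (le_of_lt hρinv)
    calc 2 * ρ * ((n:ℝ) + 1) = 2 * (ρ⁻¹ * (((n:ℝ) + 1) * (ρ * ρ))) := by
          field_simp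
      _ ≤ 2 * (ρ⁻¹ * (2 * (2 * (g : ℝ) - 2))) := by
          apply mul_le_mul_of_nonneg_left this (by norm_num)
      _ = 8 * ((g:ℝ) - 1) * ρ⁻¹ := by ring
  linarith
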